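/- Let v ≥ 1 and let d_1, …, d_v be nonnegative integers, not all zero. Then Σ_{1≤j,k≤v} B(d_j − d_k) < v · Σ_{j=1}^{v} B(d_j), where B(m) = m(m+1)/2 for integers m ≥ 0 and B(m) = 0 for m < 0. -/

import Mathlib

/-!
Each term `B(d_j - d_k)` is at most `B(d_j)`, since `B` is monotone and `d_k ≥ 0`; the right-hand
side is exactly the sum of these `v²` upper bounds. For an index `j` with `d_j > 0` the diagonal
term `B(d_j - d_j) = B(0) = 0` falls strictly below `B(d_j) > 0`.
-/

/-- `Bb m = m(m+1)/2` for `m ≥ 0` and `Bb m = 0` for `m < 0`;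
equivalently `Bb m` is the binomial coefficient `C(m+1, 2)` with the
convention `C(a, 2) = 0` for `a ≤ 0`. -/
def Bb (m : ℤ) : ℤ := if 0 ≤ m then m * (m + 1) / 2 else 0

@[simp]
lemma Bb_zero : Bb 0 = 0 := rfl

lemma Bb_nonneg (m : ℤ) : 0 ≤ Bb m := by
  unfold Bb
  split_ifs with hm
  · exact Int.ediv_nonneg (by nlinarith) zero_le_two
  · rfl

lemma Bb_pos {m : ℤ} (hm : 0 < m) : 0 < Bb m := by
  rw [Bb, if_pos hm.le]
  exact Int.ediv_pos_of_pos_of_dvd (by positivity) zero_le_two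
    (Int.even_mul_succ_self m).two_dvd

lemma Bb_monotone : Monotone Bb := by
  intro a b hab
  by_cases ha : 0 ≤ a
  · rw [Bb, Bb, if_pos ha, if_pos (ha.trans hab)]
    exact Int.ediv_le_ediv zero_lt_two (by nlinarith)
  · rw [Bb, if_neg ha]
    exact Bb_nonneg b

theorem sum_B_sub_lt_general (v : ℕ) (d : Fin v → ℕ) (hd : ∃ j, d j ≠ 0) :
    (∑ j, ∑ k, Bb ((d j : ℤ) - (d k : ℤ))) < (v : ℤ) * ∑ j, Bb (d j : ℤ) := by
  obtain ⟨j₀, hj₀⟩ := hd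
  have hle (j k : Fin v) : Bb ((d j : ℤ) - d k) ≤ Bb (d j) :=
    Bb_monotone (sub_le_self _ (Int.natCast_nonneg _))
  have hlt : Bb ((d j₀ : ℤ) - d j₀) < Bb (d j₀) := by
    rw [sub_self, Bb_zero]
    exact Bb_pos (by omega)
  calc ∑ j, ∑ k, Bb ((d j : ℤ) - d k)
      < ∑ j, ∑ _k : Fin v, Bb (d j) :=
        Finset.sum_lt_sum (fun j _ => Finset.sum_le_sum fun k _ => hle j k)
          ⟨j₀, Finset.mem_univ _,
            Finset.sum_lt_sum (fun k _ => hle j₀ k) ⟨j₀, Finset.mem_univ _, hlt⟩⟩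
    _ = v * ∑ j, Bb (d j) := by simp [Finset.mul_sum]

/-- If `d_1, …, d_v` are nonnegative integers, not all zero, then
`Σ_{1≤j,k≤v} B(d_j − d_k) < v · Σ_j B(d_j)`. -/
theorem sum_B_sub_lt (v : ℕ) (hv : 1 ≤ v) (d : Fin v → ℕ) (hd : ∃ j, d j ≠ 0) :
    (∑ j, ∑ k, Bb ((d j : ℤ) - (d k : ℤ))) < (v : ℤ) * ∑ j, Bb (d j : ℤ) :=
  sum_B_sub_lt_general v d hd
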